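/- arXiv:math/0611751 — 4 statements merged into one kernel-verified Lean document; each statement's English description precedes it below -/
import Mathlib

section
/- Let ξ and ξ' be independent random vectors on a probability space (Ω, P), each distributed according to the standard Gaussian measure on the Euclidean space ℝⁿ, let C : ℝⁿ → ℝⁿ be linear with operator norm ‖C‖ ≤ 1, and set η = (Id − C C*)^{1/2} ξ' + C ξ. Then for every φ ∈ ℝⁿ, almost surely E[ exp(⟨φ, η⟩ − ½‖φ‖²) | σ(ξ) ] = exp(⟨C*φ, ξ⟩ − ½‖C*φ‖²), where σ(ξ) is the σ-algebra generated by ξ. -/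
open MeasureTheory ProbabilityTheory
open scoped RealInnerProductSpace

/-- The standard Gaussian measure on the Euclidean space `ℝⁿ`:
the centered Gaussian measure with identity covariance, realized as the image of the
product of `n` standard Gaussian measures on `ℝ`. -/
noncomputable def stdGaussian (n : ℕ) : Measure (EuclideanSpace ℝ (Fin n)) :=
  (Measure.pi fun _ : Fin n => gaussianReal 0 1).map
    (MeasurableEquiv.toLp 2 (Fin n → ℝ))

/-!
Writing `wickExp v x = exp (⟪v, x⟫ - ‖v‖² / 2)`, the identity `R² = Id - C C*` gives
`‖R φ‖² + ‖C* φ‖² = ‖φ‖²`, so `wickExp φ (R ξ' + C ξ) = wickExp (C* φ) ξ * wickExp (R φ) ξ'`.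
The first factor is `σ(ξ)`-measurable and pulls out of the conditional expectation; the second
is independent of `σ(ξ)`, so its conditional expectation is its mean, which is `1` because
`⟪R φ, ξ'⟫` is centred Gaussian with variance `‖R φ‖²`.
-/

open Real

lemma stdGaussian_eq_stdGaussian_euclideanSpace (n : ℕ) :
    _root_.stdGaussian n = ProbabilityTheory.stdGaussian (EuclideanSpace ℝ (Fin n)) :=
  map_pi_eq_stdGaussian

section

variable {E : Type*} [NormedAddCommGroup E] [InnerProductSpace ℝ E]

noncomputable def wickExp (v x : E) : ℝ := exp (⟪v, x⟫ - ‖v‖ ^ 2 / 2)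

lemma wickExp_eq_exp_inner_mul (v : E) :
    wickExp v = fun x ↦ exp ⟪v, x⟫ * exp (-(‖v‖ ^ 2 / 2)) := by
  ext x
  rw [wickExp, sub_eq_add_neg, exp_add]

lemma continuous_wickExp (v : E) : Continuous (wickExp v) := by
  unfold wickExp; fun_prop

lemma wickExp_add_apply {F G : Type*} [NormedAddCommGroup F] [InnerProductSpace ℝ F]
    [NormedAddCommGroup G] [InnerProductSpace ℝ G] [CompleteSpace E] [CompleteSpace F]
    [CompleteSpace G] (A : F →L[ℝ] E) (B : G →L[ℝ] E) {v : E}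
    (hv : ‖A.adjoint v‖ ^ 2 + ‖B.adjoint v‖ ^ 2 = ‖v‖ ^ 2) (x : F) (y : G) :
    wickExp v (A x + B y) = wickExp (A.adjoint v) x * wickExp (B.adjoint v) y := by
  simp only [wickExp, ← exp_add, inner_add_right, ← ContinuousLinearMap.adjoint_inner_left,
    ← hv]
  ring_nf

lemma norm_adjoint_sq_add_norm_sq_of_mul_self_eq [CompleteSpace E] {F : Type*}
    [NormedAddCommGroup F] [InnerProductSpace ℝ F] [CompleteSpace F] {C : F →L[ℝ] E}
    {R : E →L[ℝ] E} (hR : R.adjoint = R) (hRC : R ∘L R = .id ℝ E - C ∘L C.adjoint) (v : E) :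
    ‖C.adjoint v‖ ^ 2 + ‖R v‖ ^ 2 = ‖v‖ ^ 2 := by
  rw [ContinuousLinearMap.apply_norm_sq_eq_inner_adjoint_left C.adjoint,
    ContinuousLinearMap.adjoint_adjoint,
    ContinuousLinearMap.apply_norm_sq_eq_inner_adjoint_left R, hR, hRC]
  simp [inner_sub_left]

variable [FiniteDimensional ℝ E] [MeasurableSpace E] [BorelSpace E]

lemma map_inner_stdGaussian (v : E) :
    (ProbabilityTheory.stdGaussian E).map (fun x ↦ ⟪v, x⟫) = gaussianReal 0 (‖v‖₊ ^ 2) := by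
  have h := IsGaussian.map_eq_gaussianReal (μ := ProbabilityTheory.stdGaussian E) (innerSL ℝ v)
  rw [integral_strongDual_stdGaussian, variance_dual_stdGaussian, innerSL_apply_norm,
    ← coe_nnnorm, ← NNReal.coe_pow, Real.toNNReal_coe] at h
  exact h

lemma integrable_wickExp_stdGaussian (v : E) :
    Integrable (wickExp v) (ProbabilityTheory.stdGaussian E) := by
  have h := (mgf_pos_iff (t := 1)).1
    (by rw [mgf_gaussianReal (map_inner_stdGaussian v)]; positivity)
  simpa [wickExp_eq_exp_inner_mul] using h.mul_const (exp (-(‖v‖ ^ 2 / 2)))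

lemma integral_wickExp_stdGaussian (v : E) :
    ∫ x, wickExp v x ∂ProbabilityTheory.stdGaussian E = 1 := by
  have h := mgf_gaussianReal (map_inner_stdGaussian v) 1
  simp only [mgf, one_mul] at h
  rw [wickExp_eq_exp_inner_mul, integral_mul_const, h, ← exp_add]
  simp

end

lemma condExp_comap_mul_of_indepFun {Ω S T : Type*} {mΩ : MeasurableSpace Ω} [MeasurableSpace S]
    [MeasurableSpace T] {μ : Measure Ω} [IsFiniteMeasure μ] {X : Ω → S} {Y : Ω → T}
    (hX : Measurable X) (hY : Measurable Y) (hXY : IndepFun X Y μ) {f : S → ℝ} {g : T → ℝ}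
    (hf : Measurable f) (hg : Measurable g) (hf_int : Integrable f (μ.map X))
    (hg_int : Integrable g (μ.map Y)) :
    μ[fun ω ↦ f (X ω) * g (Y ω) | MeasurableSpace.comap X inferInstance]
      =ᵐ[μ] fun ω ↦ f (X ω) * ∫ y, g y ∂(μ.map Y) := by
  have hfX : Integrable (f ∘ X) μ := hf_int.comp_measurable hX
  have hgY : Integrable (g ∘ Y) μ := hg_int.comp_measurable hY
  have hfX_meas : StronglyMeasurable[MeasurableSpace.comap X inferInstance] (f ∘ X) :=
    (hf.comp (comap_measurable X)).stronglyMeasurable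
  have hgY_meas : StronglyMeasurable[MeasurableSpace.comap Y inferInstance] (g ∘ Y) :=
    (hg.comp (comap_measurable Y)).stronglyMeasurable
  have hgY_indep : μ[g ∘ Y | MeasurableSpace.comap X inferInstance] =ᵐ[μ] fun _ ↦ μ[g ∘ Y] :=
    condExp_indep_eq hY.comap_le hX.comap_le hgY_meas hXY.symm
  have hfg : Integrable (f ∘ X * g ∘ Y) μ :=
    (hXY.comp hf hg).integrable_mul hfX hgY
  filter_upwards [condExp_mul_of_stronglyMeasurable_left hfX_meas hfg hgY, hgY_indep]
    with ω h_pull h_indep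
  rw [integral_map hY.aemeasurable hg.aestronglyMeasurable]
  exact h_pull.trans (congrArg (f (X ω) * ·) h_indep)

theorem condexp_wick_exponential_second_quantization_general
    {Ω : Type*} [MeasureSpace Ω] [IsProbabilityMeasure (ℙ : Measure Ω)] {n : ℕ}
    (ξ ξ' : Ω → EuclideanSpace ℝ (Fin n)) (hξ : Measurable ξ) (hξ' : Measurable ξ')
    (hindep : IndepFun ξ ξ' ℙ)
    (hlaw : Measure.map ξ ℙ = stdGaussian n) (hlaw' : Measure.map ξ' ℙ = stdGaussian n)
    (C R : EuclideanSpace ℝ (Fin n) →L[ℝ] EuclideanSpace ℝ (Fin n))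
    (hR_selfAdjoint : ContinuousLinearMap.adjoint R = R)
    (hR_sq : R ∘L R = ContinuousLinearMap.id ℝ _ - C ∘L ContinuousLinearMap.adjoint C)
    (η : Ω → EuclideanSpace ℝ (Fin n)) (hη : ∀ ω, η ω = R (ξ' ω) + C (ξ ω))
    (φ : EuclideanSpace ℝ (Fin n)) :
    ℙ[fun ω => Real.exp (⟪φ, η ω⟫ - ‖φ‖ ^ 2 / 2) | MeasurableSpace.comap ξ inferInstance]
      =ᵐ[ℙ] fun ω => Real.exp (⟪ContinuousLinearMap.adjoint C φ, ξ ω⟫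
        - ‖ContinuousLinearMap.adjoint C φ‖ ^ 2 / 2) := by
  rw [stdGaussian_eq_stdGaussian_euclideanSpace] at hlaw hlaw'
  have hnorm : ‖C.adjoint φ‖ ^ 2 + ‖R.adjoint φ‖ ^ 2 = ‖φ‖ ^ 2 := by
    rw [hR_selfAdjoint]
    exact norm_adjoint_sq_add_norm_sq_of_mul_self_eq hR_selfAdjoint hR_sq φ
  have hsplit (ω : Ω) :
      wickExp φ (η ω) = wickExp (C.adjoint φ) (ξ ω) * wickExp (R φ) (ξ' ω) := by
    rw [hη, add_comm, wickExp_add_apply C R hnorm, hR_selfAdjoint]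
  have key := condExp_comap_mul_of_indepFun hξ hξ' hindep
    (continuous_wickExp (C.adjoint φ)).measurable (continuous_wickExp (R φ)).measurable
    (hlaw ▸ integrable_wickExp_stdGaussian _) (hlaw' ▸ integrable_wickExp_stdGaussian _)
  rw [hlaw', integral_wickExp_stdGaussian] at key
  simp only [mul_one, ← hsplit] at key
  exact key

/-- If `ξ, ξ'` are independent standard Gaussian random vectors in `ℝⁿ`, `C` is a linear map
with `‖C‖ ≤ 1`, `R` is the positive semidefinite square root of `Id - C C*`, and
`η = R ξ' + C ξ`, then for every `φ ∈ ℝⁿ`, almost surely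
`E[exp(⟪φ, η⟫ - ½‖φ‖²) | σ(ξ)] = exp(⟪C*φ, ξ⟫ - ½‖C*φ‖²)`. -/
theorem condexp_wick_exponential_second_quantization
    {Ω : Type*} [MeasureSpace Ω] [IsProbabilityMeasure (ℙ : Measure Ω)] {n : ℕ}
    (ξ ξ' : Ω → EuclideanSpace ℝ (Fin n)) (hξ : Measurable ξ) (hξ' : Measurable ξ')
    (hindep : IndepFun ξ ξ' ℙ)
    (hlaw : Measure.map ξ ℙ = stdGaussian n) (hlaw' : Measure.map ξ' ℙ = stdGaussian n)
    (C R : EuclideanSpace ℝ (Fin n) →L[ℝ] EuclideanSpace ℝ (Fin n))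
    (hC : ‖C‖ ≤ 1)
    (hR_selfAdjoint : ContinuousLinearMap.adjoint R = R)
    (hR_pos : ∀ x, 0 ≤ ⟪R x, x⟫)
    (hR_sq : R ∘L R = ContinuousLinearMap.id ℝ _ - C ∘L ContinuousLinearMap.adjoint C)
    (η : Ω → EuclideanSpace ℝ (Fin n)) (hη : ∀ ω, η ω = R (ξ' ω) + C (ξ ω))
    (φ : EuclideanSpace ℝ (Fin n)) :
    ℙ[fun ω => Real.exp (⟪φ, η ω⟫ - ‖φ‖ ^ 2 / 2) | MeasurableSpace.comap ξ inferInstance]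
      =ᵐ[ℙ] fun ω => Real.exp (⟪ContinuousLinearMap.adjoint C φ, ξ ω⟫
        - ‖ContinuousLinearMap.adjoint C φ‖ ^ 2 / 2) :=
  condexp_wick_exponential_second_quantization_general ξ ξ' hξ hξ' hindep hlaw hlaw' C R
    hR_selfAdjoint hR_sq η hη φ
end

section
/- Let (Ω, F, P) be a probability space, E₁ and E₂ standard Borel spaces, and W₁, X₁ : Ω → E₁, W₂, X₂ : Ω → E₂ measurable maps. Suppose the joint law of (X₁, X₂) is absolutely continuous with respect to the joint law of (W₁, W₂), with density p : E₁ × E₂ → [0, ∞) (measurable). Let ν(u, ·) denote (a version of) the conditional distribution of W₁ given W₂ = u, i.e. the disintegration of law(W₁, W₂) with respect to law(W₂). Then for law(X₂)-almost every u the denominator ∫_{E₁} p(v, u) ν(u, dv) is strictly positive, and for every bounded measurable φ : E₁ → ℝ, the function ψ(u) := (∫_{E₁} φ(v) p(v, u) ν(u, dv)) / (∫_{E₁} p(v, u) ν(u, dv)) satisfies: ψ(X₂) is a version of the conditional expectation E[ φ(X₁) | σ(X₂) ], i.e. ψ ∘ X₂ = E[ φ ∘ X₁ | σ(X₂) ]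 P-almost surely. -/
/-!
Writing `m = law(W₂)`, the hypothesis on `ν` says `law(W₁, W₂)` is the image of `m ⊗ ν` under
`swap`. Integrating the density `p` along `ν` then shows that `law(X₂)` has density
`Z(u) = ∫ p(v, u) ν(u, dv)` with respect to `m`, so `Z > 0` holds `law(X₂)`-a.e. For measurable
`B`, Fubini for `m ⊗ ν` turns `∫_{X₂ ∈ B} φ(X₁) dP` into `∫_B ∫ φ(v) p(v, u) ν(u, dv) m(du)`,
and on the other side `Z · ψ` is this inner integral wherever `Z < ∞`, i.e. `m`-a.e., so
`∫_{X₂ ∈ B} ψ(X₂) dP` has the same value. Uniqueness of conditional expectation concludes.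
-/

open MeasureTheory ProbabilityTheory
open scoped ENNReal

section

variable {α β : Type*} [MeasurableSpace α] [MeasurableSpace β]

theorem integrable_of_isFiniteMeasure_withDensity_ofReal {μ : Measure α} {p : α → ℝ}
    (hp : AEStronglyMeasurable p μ) (hp0 : 0 ≤ᵐ[μ] p)
    [IsFiniteMeasure (μ.withDensity fun x => ENNReal.ofReal (p x))] : Integrable p μ := by
  refine ⟨hp, (hasFiniteIntegral_iff_ofReal hp0).2 ?_⟩
  simpa using measure_lt_top (μ.withDensity fun x => ENNReal.ofReal (p x)) Set.univ

theorem setIntegral_withDensity_ofReal {μ : Measure α} {p : α → ℝ} (hp : Measurable p)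
    (hp0 : 0 ≤ p) (g : α → ℝ) {s : Set α} (hs : MeasurableSet s) :
    ∫ x in s, g x ∂μ.withDensity (fun x => ENNReal.ofReal (p x)) = ∫ x in s, p x * g x ∂μ := by
  calc ∫ x in s, g x ∂μ.withDensity (fun x => ENNReal.ofReal (p x))
      = ∫ x in s, (p x).toNNReal • g x ∂μ :=
        setIntegral_withDensity_eq_setIntegral_smul (measurable_real_toNNReal.comp hp) g hs
    _ = ∫ x in s, p x * g x ∂μ := by
        simp_rw [NNReal.smul_def, Real.coe_toNNReal _ (hp0 _), smul_eq_mul]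

theorem ae_withDensity_pos {μ : Measure α} {f : α → ℝ≥0∞} (hf : Measurable f) :
    ∀ᵐ x ∂μ.withDensity f, 0 < f x :=
  (ae_withDensity_iff hf).2 <| ae_of_all _ fun _ => pos_iff_ne_zero.2

theorem ae_eq_condExp_comap_of_forall_setIntegral_map_eq {Ω E : Type*}
    {mΩ : MeasurableSpace Ω} [NormedAddCommGroup E] [NormedSpace ℝ E] [CompleteSpace E]
    {P : Measure Ω} [IsFiniteMeasure P] {Y : Ω → β} (hY : Measurable Y) {F : Ω → E}
    (hF : Integrable F P) {g : β → E} (hg : StronglyMeasurable g)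
    (hg_int : Integrable g (P.map Y))
    (h : ∀ B, MeasurableSet B → ∫ u in B, g u ∂P.map Y = ∫ ω in Y ⁻¹' B, F ω ∂P) :
    g ∘ Y =ᵐ[P] P[F | MeasurableSpace.comap Y inferInstance] := by
  have hgY : Integrable (g ∘ Y) P :=
    (integrable_map_measure hg.aestronglyMeasurable hY.aemeasurable).1 hg_int
  refine ae_eq_condExp_of_forall_setIntegral_eq hY.comap_le hF (fun _ _ _ => hgY.integrableOn)
    ?_ (hg.comp_measurable (comap_measurable Y)).aestronglyMeasurable
  rintro _ ⟨B, hB, rfl⟩ -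
  rw [← h B hB, setIntegral_map hB hg.aestronglyMeasurable hY.aemeasurable]
  rfl

theorem eq_map_swap_compProd_of_forall_apply_prod {μ : Measure (α × β)} [IsFiniteMeasure μ]
    {m : Measure β} [IsFiniteMeasure m] {κ : Kernel β α} [IsFiniteKernel κ]
    (h : ∀ A, MeasurableSet A → ∀ B, MeasurableSet B → μ (A ×ˢ B) = ∫⁻ u in B, κ u A ∂m) :
    μ = (m ⊗ₘ κ).map Prod.swap :=
  Measure.ext_prod fun {A B} hA hB => by
    rw [h A hA B hB, Measure.map_apply measurable_swap (hA.prod hB), Set.preimage_swap_prod,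
      Measure.compProd_apply_prod hB hA]

noncomputable def posteriorMean (κ : Kernel β α) (p : α → β → ℝ) (φ : α → ℝ) (u : β) : ℝ :=
  (∫ v, φ v * p v u ∂κ u) / ∫ v, p v u ∂κ u

section Posterior

variable {κ : Kernel β α} {p : α → β → ℝ} {φ : α → ℝ}

theorem measurable_posteriorMean [IsSFiniteKernel κ] (hp : Measurable (Function.uncurry p))
    (hφ : Measurable φ) : Measurable (posteriorMean κ p φ) :=
  (StronglyMeasurable.integral_kernel_prod_right (f := fun u v => φ v * p v u)
      ((hφ.comp measurable_snd).mul (hp.comp measurable_swap)).stronglyMeasurable).measurable.div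
    (StronglyMeasurable.integral_kernel_prod_right (f := fun u v => p v u)
      (hp.comp measurable_swap).stronglyMeasurable).measurable

theorem abs_posteriorMean_le (hp0 : ∀ v u, 0 ≤ p v u) {C : ℝ} (hC : ∀ v, |φ v| ≤ C)
    (hC0 : 0 ≤ C) (u : β) : |posteriorMean κ p φ u| ≤ C := by
  have hφp : ∀ v, |φ v * p v u| ≤ C * p v u := fun v => by
    rw [abs_mul, abs_of_nonneg (hp0 v u)]
    exact mul_le_mul_of_nonneg_right (hC v) (hp0 v u)
  rcases (integral_nonneg fun v => hp0 v u : 0 ≤ ∫ v, p v u ∂κ u).eq_or_lt with hden | hden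
  · rw [posteriorMean, ← hden, div_zero, abs_zero]
    exact hC0
  have hint : Integrable (fun v => p v u) (κ u) := Integrable.of_integral_ne_zero hden.ne'
  rw [posteriorMean, abs_div, abs_of_pos hden, div_le_iff₀ hden, ← integral_const_mul]
  exact abs_integral_le_integral_abs.trans <| integral_mono_of_nonneg
    (ae_of_all _ fun _ => abs_nonneg _) (hint.const_mul C) (ae_of_all _ hφp)

theorem toReal_lintegral_mul_posteriorMean (hp : Measurable (Function.uncurry p))
    (hp0 : ∀ v u, 0 ≤ p v u) {u : β} (hu : ∫⁻ v, ENNReal.ofReal (p v u) ∂κ u ≠ ∞) :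
    (∫⁻ v, ENNReal.ofReal (p v u) ∂κ u).toReal * posteriorMean κ p φ u
      = ∫ v, φ v * p v u ∂κ u := by
  have hpu : Measurable fun v => p v u := hp.comp (measurable_id.prodMk measurable_const)
  rw [← integral_eq_lintegral_of_nonneg_ae (ae_of_all _ (hp0 · u)) hpu.aestronglyMeasurable]
  refine mul_div_cancel_of_imp' fun hden => integral_eq_zero_of_ae ?_
  have hint : Integrable (fun v => p v u) (κ u) :=
    ⟨hpu.aestronglyMeasurable, (hasFiniteIntegral_iff_ofReal (ae_of_all _ (hp0 · u))).2 hu.lt_top⟩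
  filter_upwards [(integral_eq_zero_iff_of_nonneg (hp0 · u) hint).1 hden] with v hv
  simp [hv]

end Posterior

section Disintegration

variable {m : Measure β} {κ : Kernel β α} [IsSFiniteKernel κ]

theorem map_snd_withDensity_map_swap_compProd [SFinite m] {f : α × β → ℝ≥0∞}
    (hf : Measurable f) :
    (((m ⊗ₘ κ).map Prod.swap).withDensity f).map Prod.snd
      = m.withDensity fun u => ∫⁻ v, f (v, u) ∂κ u := by
  ext B hB
  rw [Measure.map_apply measurable_snd hB, withDensity_apply _ (measurable_snd hB),
    withDensity_apply _ hB, setLIntegral_map (measurable_snd hB) hf measurable_swap,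
    ← Set.univ_prod, Set.preimage_swap_prod,
    Measure.setLIntegral_compProd (f := fun x => f x.swap) (hf.comp measurable_swap) hB .univ]
  simp

theorem setIntegral_preimage_snd_of_eq_withDensity_map_swap_compProd [SFinite m]
    {ρ : Measure (α × β)} [IsFiniteMeasure ρ] {p : α → β → ℝ}
    (hp : Measurable (Function.uncurry p)) (hp0 : ∀ v u, 0 ≤ p v u)
    (hρ : ρ = ((m ⊗ₘ κ).map Prod.swap).withDensity fun x => ENNReal.ofReal (p x.1 x.2))
    {φ : α → ℝ} (hφ : Measurable φ) {C : ℝ} (hC : ∀ v, |φ v| ≤ C) {B : Set β}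
    (hB : MeasurableSet B) :
    ∫ x in Prod.snd ⁻¹' B, φ x.1 ∂ρ = ∫ u in B, ∫ v, φ v * p v u ∂κ u ∂m := by
  have hpi : Integrable (fun z : β × α => p z.2 z.1) (m ⊗ₘ κ) := by
    have : IsFiniteMeasure (((m ⊗ₘ κ).map Prod.swap).withDensity
        fun x => ENNReal.ofReal (p x.1 x.2)) := hρ ▸ ‹_›
    exact (integrable_map_measure hp.aestronglyMeasurable measurable_swap.aemeasurable).1
      (integrable_of_isFiniteMeasure_withDensity_ofReal (p := fun x : α × β => p x.1 x.2)
        hp.aestronglyMeasurable (ae_of_all _ fun x => hp0 x.1 x.2))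
  have hpφ : Integrable (fun z : β × α => p z.2 z.1 * φ z.2) (m ⊗ₘ κ) := by
    refine (hpi.mul_const C).mono' ((hp.comp measurable_swap).mul
      (hφ.comp measurable_snd)).aestronglyMeasurable (ae_of_all _ fun z => ?_)
    rw [Real.norm_eq_abs, abs_mul, abs_of_nonneg (hp0 z.2 z.1)]
    exact mul_le_mul_of_nonneg_left (hC z.2) (hp0 z.2 z.1)
  rw [hρ, setIntegral_withDensity_ofReal (p := fun x : α × β => p x.1 x.2) hp
      (fun x => hp0 x.1 x.2) _ (measurable_snd hB),
    setIntegral_map (f := fun x : α × β => p x.1 x.2 * φ x.1) (measurable_snd hB)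
      (hp.mul (hφ.comp measurable_fst)).aestronglyMeasurable measurable_swap.aemeasurable,
    ← Set.univ_prod, Set.preimage_swap_prod]
  simp only [Prod.fst_swap, Prod.snd_swap]
  rw [Measure.setIntegral_compProd hB .univ hpφ.integrableOn]
  simp only [Measure.restrict_univ, mul_comm]

theorem setIntegral_posteriorMean_of_eq_withDensity {ρ : Measure β} [IsFiniteMeasure ρ]
    {p : α → β → ℝ} (hp : Measurable (Function.uncurry p)) (hp0 : ∀ v u, 0 ≤ p v u)
    (hρ : ρ = m.withDensity fun u => ∫⁻ v, ENNReal.ofReal (p v u) ∂κ u) (φ : α → ℝ)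
    {B : Set β} (hB : MeasurableSet B) :
    ∫ u in B, posteriorMean κ p φ u ∂ρ = ∫ u in B, ∫ v, φ v * p v u ∂κ u ∂m := by
  have hD : Measurable fun u => ∫⁻ v, ENNReal.ofReal (p v u) ∂κ u :=
    (ENNReal.measurable_ofReal.comp (hp.comp measurable_swap)).lintegral_kernel_prod_right'
  have hD_fin : ∀ᵐ u ∂m, ∫⁻ v, ENNReal.ofReal (p v u) ∂κ u < ∞ :=
    ae_lt_top hD (by simpa [hρ] using measure_ne_top ρ Set.univ)
  rw [hρ, setIntegral_withDensity_eq_setIntegral_toReal_smul hD (ae_restrict_of_ae hD_fin) _ hB]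
  exact setIntegral_congr_ae hB
    (hD_fin.mono fun u hu _ => toReal_lintegral_mul_posteriorMean hp hp0 hu.ne)

end Disintegration

end

theorem bayes_formula_for_conditional_expectation_general
    {Ω E₁ E₂ : Type*} [MeasurableSpace Ω] [MeasurableSpace E₁] [MeasurableSpace E₂]
    (P : Measure Ω) [IsProbabilityMeasure P]
    (W₁ X₁ : Ω → E₁) (W₂ X₂ : Ω → E₂)
    (hX₁ : Measurable X₁) (hX₂ : Measurable X₂)
    (p : E₁ → E₂ → ℝ) (hp : Measurable (Function.uncurry p)) (hp0 : ∀ v u, 0 ≤ p v u)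
    (habs : Measure.map (fun ω => (X₁ ω, X₂ ω)) P
      = (Measure.map (fun ω => (W₁ ω, W₂ ω)) P).withDensity
          (fun x => ENNReal.ofReal (p x.1 x.2)))
    (ν : Kernel E₂ E₁) [IsMarkovKernel ν]
    (hν : ∀ A : Set E₁, MeasurableSet A → ∀ B : Set E₂, MeasurableSet B →
      Measure.map (fun ω => (W₁ ω, W₂ ω)) P (A ×ˢ B)
        = ∫⁻ u in B, ν u A ∂(Measure.map W₂ P)) :
    (∀ᵐ u ∂(Measure.map X₂ P), 0 < ∫⁻ v, ENNReal.ofReal (p v u) ∂(ν u)) ∧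
    (∀ φ : E₁ → ℝ, Measurable φ → (∃ M : ℝ, ∀ v, |φ v| ≤ M) →
      (fun ω => (∫ v, φ v * p v (X₂ ω) ∂(ν (X₂ ω))) / (∫ v, p v (X₂ ω) ∂(ν (X₂ ω))))
        =ᵐ[P] P[fun ω => φ (X₁ ω) | MeasurableSpace.comap X₂ inferInstance]) := by
  rw [eq_map_swap_compProd_of_forall_apply_prod hν] at habs
  have hX₂_law :
      P.map X₂ = (P.map W₂).withDensity fun u => ∫⁻ v, ENNReal.ofReal (p v u) ∂ν u := by
    rw [← map_snd_withDensity_map_swap_compProd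
      (f := fun x : E₁ × E₂ => ENNReal.ofReal (p x.1 x.2)) (ENNReal.measurable_ofReal.comp hp),
      ← habs,
      Measure.map_map measurable_snd (hX₁.prodMk hX₂)]
    rfl
  refine ⟨hX₂_law ▸ ae_withDensity_pos
    (ENNReal.measurable_ofReal.comp (hp.comp measurable_swap)).lintegral_kernel_prod_right',
    fun φ hφ ⟨M, hM⟩ => ?_⟩
  have hφM : ∀ v, |φ v| ≤ max M 0 := fun v => (hM v).trans (le_max_left M 0)
  refine ae_eq_condExp_comap_of_forall_setIntegral_map_eq (g := posteriorMean ν p φ) hX₂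
    (.of_bound (hφ.comp hX₁).aestronglyMeasurable (max M 0) (ae_of_all _ fun ω => hφM (X₁ ω)))
    (measurable_posteriorMean hp hφ).stronglyMeasurable
    (.of_bound (measurable_posteriorMean hp hφ).aestronglyMeasurable (max M 0)
      (ae_of_all _ (abs_posteriorMean_le hp0 hφM (le_max_right M 0))))
    fun B hB => ?_
  rw [setIntegral_posteriorMean_of_eq_withDensity hp hp0 hX₂_law φ hB,
    ← setIntegral_preimage_snd_of_eq_withDensity_map_swap_compProd hp hp0 habs hφ hφM hB,
    setIntegral_map (f := fun x : E₁ × E₂ => φ x.1) (measurable_snd hB)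
      (hφ.comp measurable_fst).aestronglyMeasurable (hX₁.prodMk hX₂).aemeasurable]
  rfl

/-- Bayes formula for smoothing: if `law(X₁, X₂) ≪ law(W₁, W₂)` with density `p`, and `ν` is
the conditional distribution of `W₁` given `W₂`, then the denominator
`∫ p(v, u) ν(u, dv)` is a.e. positive and
`ψ(u) = (∫ φ(v) p(v,u) ν(u,dv)) / (∫ p(v,u) ν(u,dv))` composed with `X₂` is a version of
`E[φ(X₁) | σ(X₂)]`. -/
theorem bayes_formula_for_conditional_expectation
    {Ω E₁ E₂ : Type*} [MeasurableSpace Ω]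
    [MeasurableSpace E₁] [StandardBorelSpace E₁]
    [MeasurableSpace E₂] [StandardBorelSpace E₂]
    (P : Measure Ω) [IsProbabilityMeasure P]
    (W₁ X₁ : Ω → E₁) (W₂ X₂ : Ω → E₂)
    (hW₁ : Measurable W₁) (hX₁ : Measurable X₁)
    (hW₂ : Measurable W₂) (hX₂ : Measurable X₂)
    (p : E₁ → E₂ → ℝ) (hp : Measurable (Function.uncurry p)) (hp0 : ∀ v u, 0 ≤ p v u)
    (habs : Measure.map (fun ω => (X₁ ω, X₂ ω)) P
      = (Measure.map (fun ω => (W₁ ω, W₂ ω)) P).withDensity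
          (fun x => ENNReal.ofReal (p x.1 x.2)))
    (ν : Kernel E₂ E₁) [IsMarkovKernel ν]
    (hν : ∀ A : Set E₁, MeasurableSet A → ∀ B : Set E₂, MeasurableSet B →
      Measure.map (fun ω => (W₁ ω, W₂ ω)) P (A ×ˢ B)
        = ∫⁻ u in B, ν u A ∂(Measure.map W₂ P)) :
    (∀ᵐ u ∂(Measure.map X₂ P), 0 < ∫⁻ v, ENNReal.ofReal (p v u) ∂(ν u)) ∧
    (∀ φ : E₁ → ℝ, Measurable φ → (∃ M : ℝ, ∀ v, |φ v| ≤ M) →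
      (fun ω => (∫ v, φ v * p v (X₂ ω) ∂(ν (X₂ ω))) / (∫ v, p v (X₂ ω) ∂(ν (X₂ ω))))
        =ᵐ[P] P[fun ω => φ (X₁ ω) | MeasurableSpace.comap X₂ inferInstance]) :=
  bayes_formula_for_conditional_expectation_general P W₁ X₁ W₂ X₂ hX₁ hX₂ p hp hp0 habs ν hν
end

section
/- Let H = L²([0,1], ℝ²) and for t ∈ [0,1] let P_t : H → H be the orthogonal projection (P_t φ)(s) = 1_{[0,t]}(s) φ(s). Let S, T : H → H be bounded linear operators and c ≥ 0 a constant such that: (a) P_t S = P_t S P_t for every t ∈ [0,1]; and (b) ‖P_t (T φ)‖² ≤ c ∫₀ᵗ ‖P_s φ‖² ds for every φ ∈ H and t ∈ [0,1]. Then for every n ≥ 1 and every φ ∈ H: ‖(S ∘ T)ⁿ φ‖² ≤ (‖S‖² c)ⁿ / n! · ‖φ‖². -/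
/-!
Condition (a) lets one insert `P t` between `S` and `T`, so that
`‖P t (S T ψ)‖² ≤ ‖S‖² ‖P t (T ψ)‖² ≤ ‖S‖² c ∫₀ᵗ ‖P s ψ‖² ds`. Feeding the bound for `(S T)ⁿ φ`
into this Volterra-type estimate gives `‖P t ((S T)ⁿ φ)‖² ≤ (‖S‖² c t)ⁿ / n! ‖φ‖²` by induction
on `n`, and `P 1` preserves norms.
-/

open MeasureTheory

namespace MeasureTheory.Lp

variable {α E : Type*} [MeasurableSpace α] {μ : Measure α} [NormedAddCommGroup E]
  {p : ENNReal} {f g : Lp E p μ} {s : Set α}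

theorem norm_le_of_ae_eq_indicator (h : (f : α → E) =ᵐ[μ] s.indicator g) : ‖f‖ ≤ ‖g‖ := by
  rw [Lp.norm_def, Lp.norm_def, eLpNorm_congr_ae h]
  exact ENNReal.toReal_mono (Lp.eLpNorm_ne_top g) (eLpNorm_indicator_le _)

theorem norm_eq_of_ae_eq_indicator (h : (f : α → E) =ᵐ[μ] s.indicator g)
    (hs : ∀ᵐ x ∂μ, x ∈ s) : ‖f‖ = ‖g‖ := by
  have hg : s.indicator g =ᵐ[μ] g := by
    filter_upwards [hs] with x hx using Set.indicator_of_mem hx _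
  rw [Lp.norm_def, Lp.norm_def, eLpNorm_congr_ae (h.trans hg)]

theorem monotone_norm_of_ae_eq_indicator {P : ℝ → Lp E p μ → Lp E p μ} {s : ℝ → Set α}
    (hs : Monotone s) (hP : ∀ t f, (P t f : α → E) =ᵐ[μ] (s t).indicator f)
    (f : Lp E p μ) : Monotone fun t => ‖P t f‖ := by
  intro t u htu
  have hPP : P t (P u f) = P t f := by
    ext1
    filter_upwards [hP t (P u f), hP u f, hP t f] with x htu' hu ht
    by_cases hx : x ∈ s t
    · rw [htu', ht, Set.indicator_of_mem hx, Set.indicator_of_mem hx, hu,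
        Set.indicator_of_mem (hs htu hx)]
    · rw [htu', ht, Set.indicator_of_notMem hx, Set.indicator_of_notMem hx]
  change ‖P t f‖ ≤ ‖P u f‖
  rw [← hPP]
  exact norm_le_of_ae_eq_indicator (hP t _)

end MeasureTheory.Lp

theorem integral_mul_pow_div_factorial (K t : ℝ) (n : ℕ) :
    ∫ s in (0:ℝ)..t, (K * s) ^ n / n.factorial = K ^ n * t ^ (n + 1) / (n + 1).factorial := by
  simp_rw [mul_pow, mul_div_assoc]
  rw [intervalIntegral.integral_const_mul, intervalIntegral.integral_div, integral_pow,
    Nat.factorial_succ]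
  push_cast
  field_simp
  ring

section Volterra

variable {E : Type*} [NormedAddCommGroup E] [NormedSpace ℝ E] {P : ℝ → E →L[ℝ] E}

theorem norm_sq_apply_comp_le_of_volterra (hP : ∀ t x, ‖P t x‖ ≤ ‖x‖) {S T : E →L[ℝ] E}
    {c : ℝ} (hS : ∀ t ∈ Set.Icc (0:ℝ) 1, P t ∘L S = P t ∘L S ∘L P t)
    (hT : ∀ x, ∀ t ∈ Set.Icc (0:ℝ) 1, ‖P t (T x)‖ ^ 2 ≤ c * ∫ s in (0:ℝ)..t, ‖P s x‖ ^ 2)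
    (x : E) {t : ℝ} (ht : t ∈ Set.Icc (0:ℝ) 1) :
    ‖P t ((S ∘L T) x)‖ ^ 2 ≤ ‖S‖ ^ 2 * c * ∫ s in (0:ℝ)..t, ‖P s x‖ ^ 2 := by
  have hPS : P t (S (T x)) = P t (S (P t (T x))) := congr($(hS t ht) (T x))
  calc ‖P t ((S ∘L T) x)‖ ^ 2 = ‖P t (S (P t (T x)))‖ ^ 2 := by rw [S.comp_apply, hPS]
    _ ≤ (‖S‖ * ‖P t (T x)‖) ^ 2 := by gcongr; exact (hP t _).trans (S.le_opNorm _)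
    _ = ‖S‖ ^ 2 * ‖P t (T x)‖ ^ 2 := mul_pow _ _ _
    _ ≤ ‖S‖ ^ 2 * (c * ∫ s in (0:ℝ)..t, ‖P s x‖ ^ 2) := by gcongr; exact hT x t ht
    _ = ‖S‖ ^ 2 * c * ∫ s in (0:ℝ)..t, ‖P s x‖ ^ 2 := (mul_assoc _ _ _).symm

theorem norm_sq_apply_pow_le_of_volterra (hP : ∀ t x, ‖P t x‖ ≤ ‖x‖)
    (hmono : ∀ x, Monotone fun t => ‖P t x‖) {A : E →L[ℝ] E} {K : ℝ} (hK : 0 ≤ K)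
    (hA : ∀ x, ∀ t ∈ Set.Icc (0:ℝ) 1, ‖P t (A x)‖ ^ 2 ≤ K * ∫ s in (0:ℝ)..t, ‖P s x‖ ^ 2)
    (n : ℕ) (x : E) {t : ℝ} (ht : t ∈ Set.Icc (0:ℝ) 1) :
    ‖P t ((A ^ n) x)‖ ^ 2 ≤ (K * t) ^ n / n.factorial * ‖x‖ ^ 2 := by
  induction n generalizing t with
  | zero => simpa using pow_le_pow_left₀ (norm_nonneg _) (hP t x) 2
  | succ n ih =>
    have hint : ∫ s in (0:ℝ)..t, ‖P s ((A ^ n) x)‖ ^ 2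
        ≤ ∫ s in (0:ℝ)..t, (K * s) ^ n / n.factorial * ‖x‖ ^ 2 := by
      refine intervalIntegral.integral_mono_on ht.1 ?_
        (Continuous.intervalIntegrable (by fun_prop) _ _) fun s hs => ih ⟨hs.1, hs.2.trans ht.2⟩
      exact Monotone.intervalIntegrable fun a b hab =>
        pow_le_pow_left₀ (norm_nonneg _) (hmono _ hab) 2
    calc ‖P t ((A ^ (n + 1)) x)‖ ^ 2 = ‖P t (A ((A ^ n) x))‖ ^ 2 := by rw [pow_succ' A n]; rfl
      _ ≤ K * ∫ s in (0:ℝ)..t, ‖P s ((A ^ n) x)‖ ^ 2 := hA _ t ht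
      _ ≤ K * ∫ s in (0:ℝ)..t, (K * s) ^ n / n.factorial * ‖x‖ ^ 2 := by gcongr
      _ = (K * t) ^ (n + 1) / (n + 1).factorial * ‖x‖ ^ 2 := by
        rw [intervalIntegral.integral_mul_const, integral_mul_pow_div_factorial]
        ring

end Volterra

/-- Let `H = L²([0,1], ℝ²)`, let `P t` be the orthogonal projection given by multiplication
with `1_{[0,t]}`, and let `S, T` be bounded operators such that `P_t S = P_t S P_t` and
`‖P_t (T φ)‖² ≤ c ∫₀ᵗ ‖P_s φ‖² ds`.  Then `‖(S ∘ T)ⁿ φ‖² ≤ (‖S‖² c)ⁿ / n! ‖φ‖²`. -/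
theorem volterra_iterate_norm_bound
    (P : ℝ → (Lp (EuclideanSpace ℝ (Fin 2)) 2 (volume.restrict (Set.Icc (0:ℝ) 1)) →L[ℝ]
        Lp (EuclideanSpace ℝ (Fin 2)) 2 (volume.restrict (Set.Icc (0:ℝ) 1))))
    (hP : ∀ (t : ℝ) (φ : Lp (EuclideanSpace ℝ (Fin 2)) 2 (volume.restrict (Set.Icc (0:ℝ) 1))),
      (P t φ : ℝ → EuclideanSpace ℝ (Fin 2))
        =ᵐ[volume.restrict (Set.Icc (0:ℝ) 1)] (Set.Icc (0:ℝ) t).indicator φ)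
    (S T : Lp (EuclideanSpace ℝ (Fin 2)) 2 (volume.restrict (Set.Icc (0:ℝ) 1)) →L[ℝ]
        Lp (EuclideanSpace ℝ (Fin 2)) 2 (volume.restrict (Set.Icc (0:ℝ) 1)))
    (c : ℝ) (hc : 0 ≤ c)
    (ha : ∀ t ∈ Set.Icc (0:ℝ) 1, (P t) ∘L S = ((P t) ∘L S) ∘L (P t))
    (hb : ∀ (φ : Lp (EuclideanSpace ℝ (Fin 2)) 2 (volume.restrict (Set.Icc (0:ℝ) 1))),
      ∀ t ∈ Set.Icc (0:ℝ) 1, ‖P t (T φ)‖ ^ 2 ≤ c * ∫ s in (0:ℝ)..t, ‖P s φ‖ ^ 2) :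
    ∀ n : ℕ, 1 ≤ n →
      ∀ φ : Lp (EuclideanSpace ℝ (Fin 2)) 2 (volume.restrict (Set.Icc (0:ℝ) 1)),
        ‖((S ∘L T) ^ n) φ‖ ^ 2 ≤ (‖S‖ ^ 2 * c) ^ n / (n.factorial : ℝ) * ‖φ‖ ^ 2 := by
  intro n _ φ
  have hcontr : ∀ t φ, ‖P t φ‖ ≤ ‖φ‖ := fun t φ => Lp.norm_le_of_ae_eq_indicator (hP t φ)
  have hmono : ∀ φ, Monotone fun t => ‖P t φ‖ :=
    Lp.monotone_norm_of_ae_eq_indicator (fun _ _ h => Set.Icc_subset_Icc_right h) hP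
  have hP1 : ∀ φ, ‖P 1 φ‖ = ‖φ‖ := fun φ =>
    Lp.norm_eq_of_ae_eq_indicator (hP 1 φ) (ae_restrict_mem measurableSet_Icc)
  have hbound := norm_sq_apply_pow_le_of_volterra hcontr hmono (by positivity)
    (fun ψ t ht => norm_sq_apply_comp_le_of_volterra hcontr ha hb ψ ht) n φ
    (Set.right_mem_Icc.mpr zero_le_one)
  rwa [hP1, mul_one] at hbound
end

section
/- Let H = L²([0,1], ℝ²) and for t ∈ [0,1] let P_t : H → H be the orthogonal projection (P_t φ)(s) = 1_{[0,t]}(s) φ(s). Let S, T : H → H be bounded linear operators and c ≥ 0 a constant such that P_t S = P_t S P_t for every t ∈ [0,1], and ‖P_t (T φ)‖² ≤ c ∫₀ᵗ ‖P_s φ‖² ds for every φ ∈ H and t ∈ [0,1]. Then the operator S ∘ T is quasi-nilpotent: lim_{n→∞} ‖(S ∘ T)ⁿ‖^{1/n} = 0; equivalently, the spectral radius of S ∘ T is 0. -/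
/-!
Causality of `S` (`P_t S = P_t S P_t`) turns the hypothesis on `T` into the Volterra-type
inequality `‖P_t A φ‖² ≤ M ∫₀ᵗ ‖P_s φ‖² ds` for `A = S ∘ T` and `M = c ‖S‖²`. Iterating it,
the monotonicity of `s ↦ ‖P_s φ‖` lets one integrate the previous bound, giving
`‖P_t Aⁿ φ‖² ≤ (M t)ⁿ / n! ‖φ‖²`; at `t = 1` this is `‖Aⁿ‖ ≤ √(Mⁿ / n!)`, whose `n`-th root
tends to `0`, and the spectral radius is at most the `liminf` of `‖Aⁿ‖^(1/n)`.
-/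

open MeasureTheory Filter Set

open scoped ENNReal

theorem MeasureTheory.Lp.norm_le_norm_of_ae_eq_indicator {α E : Type*} [MeasurableSpace α]
    {μ : Measure α} [NormedAddCommGroup E] {p : ℝ≥0∞} {f : α → E} {g h : Lp E p μ}
    {s t : Set α} (hg : g =ᵐ[μ] s.indicator f) (hh : h =ᵐ[μ] t.indicator f)
    (hst : s ≤ᵐ[μ] t) : ‖g‖ ≤ ‖h‖ := by
  refine Lp.norm_le_norm_of_ae_le ?_
  filter_upwards [hg, hh, hst] with x hgx hhx hstx
  rw [hgx, hhx]
  by_cases hx : x ∈ s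
  · rw [indicator_of_mem hx, indicator_of_mem (hstx hx)]
  · simp [indicator_of_notMem hx]

theorem spectrum.spectralRadius_eq_zero_of_tendsto {𝕜 A : Type*} [NormedField 𝕜] [NormedRing A]
    [NormedAlgebra 𝕜 A] [CompleteSpace A] {a : A}
    (h : Tendsto (fun n : ℕ => ‖a ^ n‖ ^ (1 / n : ℝ)) atTop (nhds 0)) :
    spectralRadius 𝕜 a = 0 := by
  have h' : Tendsto (fun n : ℕ => (‖a ^ n‖₊ : ℝ≥0∞) ^ (1 / n : ℝ)) atTop (nhds 0) := by
    refine (ENNReal.ofReal_zero ▸ ENNReal.tendsto_ofReal h).congr fun n => ?_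
    rw [← ENNReal.ofReal_rpow_of_nonneg (norm_nonneg _) (by positivity), ofReal_norm,
      enorm_eq_nnnorm]
  exact le_antisymm ((spectralRadius_le_liminf_pow_nnnorm_pow_one_div 𝕜 a).trans h'.liminf_eq.le)
    zero_le

theorem tendsto_rpow_one_div_of_le_sqrt_pow_div_factorial {a : ℕ → ℝ} {M : ℝ}
    (ha₀ : ∀ n, 0 ≤ a n) (ha : ∀ n, a n ≤ √(M ^ n / n.factorial)) :
    Tendsto (fun n => a n ^ (1 / n : ℝ)) atTop (nhds 0) := by
  refine tendsto_order.2
    ⟨fun b hb => .of_forall fun n => hb.trans_le (Real.rpow_nonneg (ha₀ n) _), fun ε hε => ?_⟩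
  have hsmall : ∀ᶠ n : ℕ in atTop, (M / ε ^ 2) ^ n / n.factorial < 1 :=
    (FloorSemiring.tendsto_pow_div_factorial_atTop (M / ε ^ 2)).eventually_lt_const one_pos
  filter_upwards [hsmall, eventually_gt_atTop 0] with n hn hn₀
  have hlt : a n < ε ^ n := by
    refine (ha n).trans_lt ((Real.sqrt_lt' (by positivity)).2 ?_)
    rw [div_pow, div_div, div_lt_one (by positivity)] at hn
    rwa [div_lt_iff₀ (by positivity), ← pow_mul, mul_comm n 2, pow_mul]
  rw [one_div, Real.rpow_inv_lt_iff_of_pos (ha₀ n) hε.le (by positivity), Real.rpow_natCast]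
  exact hlt

section Volterra

variable {E : Type*} [NormedAddCommGroup E] [NormedSpace ℝ E]

def HasVolterraBound (P : ℝ → E →L[ℝ] E) (A : E →L[ℝ] E) (M : ℝ) : Prop :=
  ∀ x, ∀ t ∈ Icc (0 : ℝ) 1, ‖P t (A x)‖ ^ 2 ≤ M * ∫ s in (0 : ℝ)..t, ‖P s x‖ ^ 2

variable {P : ℝ → E →L[ℝ] E}

theorem HasVolterraBound.comp_of_causal {S T : E →L[ℝ] E} {c : ℝ} (hT : HasVolterraBound P T c)
    (hcontr : ∀ t x, ‖P t x‖ ≤ ‖x‖)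
    (hS : ∀ t ∈ Icc (0 : ℝ) 1, P t ∘L S = (P t ∘L S) ∘L P t) :
    HasVolterraBound P (S ∘L T) (‖S‖ ^ 2 * c) := by
  intro x t ht
  have hcausal : P t (S (T x)) = P t (S (P t (T x))) := DFunLike.congr_fun (hS t ht) (T x)
  calc ‖P t ((S ∘L T) x)‖ ^ 2 = ‖P t (S (P t (T x)))‖ ^ 2 := by
        rw [ContinuousLinearMap.comp_apply, hcausal]
    _ ≤ (‖S‖ * ‖P t (T x)‖) ^ 2 := by
        gcongr
        exact (hcontr _ _).trans (S.le_opNorm _)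
    _ ≤ ‖S‖ ^ 2 * (c * ∫ s in (0 : ℝ)..t, ‖P s x‖ ^ 2) := by
        rw [mul_pow]
        gcongr
        exact hT x t ht
    _ = ‖S‖ ^ 2 * c * ∫ s in (0 : ℝ)..t, ‖P s x‖ ^ 2 := (mul_assoc _ _ _).symm

theorem HasVolterraBound.norm_apply_pow_sq_le {A : E →L[ℝ] E} {M : ℝ}
    (hA : HasVolterraBound P A M) (hM : 0 ≤ M) (hcontr : ∀ t x, ‖P t x‖ ≤ ‖x‖)
    (hmono : ∀ x, Monotone fun t => ‖P t x‖) (n : ℕ) (x : E) {t : ℝ} (ht : t ∈ Icc (0 : ℝ) 1) :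
    ‖P t ((A ^ n) x)‖ ^ 2 ≤ (M * t) ^ n / n.factorial * ‖x‖ ^ 2 := by
  induction n generalizing t with
  | zero => simpa using pow_le_pow_left₀ (norm_nonneg _) (hcontr t x) 2
  | succ n ih =>
    have hint : IntervalIntegrable (fun s => ‖P s ((A ^ n) x)‖ ^ 2) volume 0 t :=
      Monotone.intervalIntegrable fun a b hab =>
        pow_le_pow_left₀ (norm_nonneg _) (hmono _ hab) 2
    have hle : ∀ s ∈ Icc 0 t, ‖P s ((A ^ n) x)‖ ^ 2 ≤ M ^ n / n.factorial * ‖x‖ ^ 2 * s ^ n :=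
      fun s hs => (ih ⟨hs.1, hs.2.trans ht.2⟩).trans_eq (by ring)
    calc ‖P t ((A ^ (n + 1)) x)‖ ^ 2 ≤ M * ∫ s in (0 : ℝ)..t, ‖P s ((A ^ n) x)‖ ^ 2 := by
          rw [pow_succ' A n]
          exact hA _ t ht
      _ ≤ M * ∫ s in (0 : ℝ)..t, M ^ n / n.factorial * ‖x‖ ^ 2 * s ^ n := by
          gcongr
          exact intervalIntegral.integral_mono_on ht.1 hint
            ((continuous_const.mul (continuous_pow n)).intervalIntegrable 0 t) hle
      _ = (M * t) ^ (n + 1) / (n + 1).factorial * ‖x‖ ^ 2 := by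
          rw [intervalIntegral.integral_const_mul, integral_pow, Nat.factorial_succ]
          push_cast
          field_simp
          ring

theorem HasVolterraBound.norm_pow_le {A : E →L[ℝ] E} {M : ℝ}
    (hA : HasVolterraBound P A M) (hM : 0 ≤ M) (hcontr : ∀ t x, ‖P t x‖ ≤ ‖x‖)
    (hmono : ∀ x, Monotone fun t => ‖P t x‖) (hfull : ∀ x, ‖x‖ ≤ ‖P 1 x‖) (n : ℕ) :
    ‖A ^ n‖ ≤ √(M ^ n / n.factorial) := by
  refine ContinuousLinearMap.opNorm_le_bound _ (Real.sqrt_nonneg _) fun x => ?_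
  have hsq : ‖P 1 ((A ^ n) x)‖ ^ 2 ≤ M ^ n / n.factorial * ‖x‖ ^ 2 := by
    simpa using hA.norm_apply_pow_sq_le hM hcontr hmono n x ⟨zero_le_one, le_rfl⟩
  calc ‖(A ^ n) x‖ ≤ √(M ^ n / n.factorial * ‖x‖ ^ 2) :=
        (Real.le_sqrt (norm_nonneg _) (by positivity)).2
          ((pow_le_pow_left₀ (norm_nonneg _) (hfull _) 2).trans hsq)
    _ = √(M ^ n / n.factorial) * ‖x‖ := by
        rw [Real.sqrt_mul (by positivity), Real.sqrt_sq (norm_nonneg _)]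

end Volterra

/-- Let `H = L²([0,1], ℝ²)`, let `P t` be the orthogonal projection given by multiplication
with `1_{[0,t]}`, and let `S, T` be bounded operators such that `P_t S = P_t S P_t` and
`‖P_t (T φ)‖² ≤ c ∫₀ᵗ ‖P_s φ‖² ds`.  Then `S ∘ T` is quasi-nilpotent:
`‖(S ∘ T)ⁿ‖^(1/n) → 0`, equivalently the spectral radius of `S ∘ T` is `0`. -/
theorem volterra_composition_quasinilpotent
    (P : ℝ → (Lp (EuclideanSpace ℝ (Fin 2)) 2 (volume.restrict (Set.Icc (0:ℝ) 1)) →L[ℝ]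
        Lp (EuclideanSpace ℝ (Fin 2)) 2 (volume.restrict (Set.Icc (0:ℝ) 1))))
    (hP : ∀ (t : ℝ) (φ : Lp (EuclideanSpace ℝ (Fin 2)) 2 (volume.restrict (Set.Icc (0:ℝ) 1))),
      (P t φ : ℝ → EuclideanSpace ℝ (Fin 2))
        =ᵐ[volume.restrict (Set.Icc (0:ℝ) 1)] (Set.Icc (0:ℝ) t).indicator φ)
    (S T : Lp (EuclideanSpace ℝ (Fin 2)) 2 (volume.restrict (Set.Icc (0:ℝ) 1)) →L[ℝ]
        Lp (EuclideanSpace ℝ (Fin 2)) 2 (volume.restrict (Set.Icc (0:ℝ) 1)))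
    (c : ℝ) (hc : 0 ≤ c)
    (ha : ∀ t ∈ Set.Icc (0:ℝ) 1, (P t) ∘L S = ((P t) ∘L S) ∘L (P t))
    (hb : ∀ (φ : Lp (EuclideanSpace ℝ (Fin 2)) 2 (volume.restrict (Set.Icc (0:ℝ) 1))),
      ∀ t ∈ Set.Icc (0:ℝ) 1, ‖P t (T φ)‖ ^ 2 ≤ c * ∫ s in (0:ℝ)..t, ‖P s φ‖ ^ 2) :
    Tendsto (fun n : ℕ => ‖(S ∘L T) ^ n‖ ^ ((1 : ℝ) / n)) atTop (nhds 0) ∧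
      spectralRadius ℝ (S ∘L T) = 0 := by
  have hcontr : ∀ t φ, ‖P t φ‖ ≤ ‖φ‖ := fun t φ =>
    Lp.norm_le_norm_of_ae_eq_indicator (hP t φ) (by rw [indicator_univ])
      (subset_univ _).eventuallyLE
  have hmono : ∀ φ, Monotone fun t => ‖P t φ‖ := fun φ _ _ hst =>
    Lp.norm_le_norm_of_ae_eq_indicator (hP _ φ) (hP _ φ) (Icc_subset_Icc_right hst).eventuallyLE
  have hfull : ∀ φ, ‖φ‖ ≤ ‖P 1 φ‖ := fun φ =>
    Lp.norm_le_norm_of_ae_eq_indicator (by rw [indicator_univ]) (hP 1 φ)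
      ((ae_restrict_mem measurableSet_Icc).mono fun _ hx _ => hx)
  have hST : HasVolterraBound P (S ∘L T) (‖S‖ ^ 2 * c) :=
    HasVolterraBound.comp_of_causal hb hcontr ha
  have hlim := tendsto_rpow_one_div_of_le_sqrt_pow_div_factorial (fun n => norm_nonneg _)
    (hST.norm_pow_le (by positivity) hcontr hmono hfull)
  exact ⟨hlim, spectrum.spectralRadius_eq_zero_of_tendsto hlim⟩
end
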